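/- Under the structural assumption, 𝒜 is nonempty, 𝒜 has at least one locally minimal element, and F equals the intersection of all locally minimal elements of 𝒜 (Proposition 1(i) of the paper, stated graph-theoretically). -/

import Mathlib

/-!  A graph-theoretic framework for d-separation in a finite directed acyclic
graph with vertex set `{y, t} ∪ S`, following the paper's conventions. -/

/-- Two vertices are adjacent if there is an edge between them in either direction. -/
def Adj {V : Type*} (E : V → V → Prop) (a b : V) : Prop := E a b ∨ E b a

/-- The full vertex sequence of a candidate path between `y` and `t` whose list of
intermediate vertices is `p`. -/
def pathSeq {V : Type*} (y t : V) (p : List V) : List V := y :: (p ++ [t])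

/-- `p` is the list of intermediate vertices of a path between `y` and `t`:
consecutive vertices of the full sequence `y :: p ++ [t]` are joined by an edge of
the graph (in either direction), and all vertices of the full sequence are
pairwise distinct. -/
def IsPath {V : Type*} (E : V → V → Prop) (y t : V) (p : List V) : Prop :=
  List.Chain' (Adj E) (pathSeq y t p) ∧ (pathSeq y t p).Nodup

/-- `v` is a collider of the path: it is an intermediate vertex and both edges of
the path adjacent to it point into it. -/
def IsCollider {V : Type*} (E : V → V → Prop) (y t : V) (p : List V) (v : V) : Prop :=
  v ∈ p ∧ ∃ a b, [a, v, b] <:+: pathSeq y t p ∧ E a v ∧ E b v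

/-- `v` is a non-collider of the path: an intermediate vertex that is not a collider. -/
def IsNonCollider {V : Type*} (E : V → V → Prop) (y t : V) (p : List V) (v : V) : Prop :=
  v ∈ p ∧ ¬ IsCollider E y t p v

/-- `d` is a descendant of `c`: there is a directed path of length ≥ 1 from `c` to `d`. -/
def Descendant {V : Type*} (E : V → V → Prop) (c d : V) : Prop := Relation.TransGen E c d

/-- The path with intermediate vertices `p` is blocked by the set `A`: some
non-collider of the path belongs to `A`, or some collider `c` of the path is such
that neither `c` nor any descendant of `c` belongs to `A`. -/
def Blocked {V : Type*} (E : V → V → Prop) (y t : V) (A : Set V) (p : List V) : Prop :=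
  (∃ v, IsNonCollider E y t p v ∧ v ∈ A) ∨
    (∃ c, IsCollider E y t p c ∧ c ∉ A ∧ ∀ d, Descendant E c d → d ∉ A)

/-- `A` d-separates `y` and `t`: `A ⊆ S` and every path between `y` and `t` is
blocked by `A`.  (`A ∈ 𝒜` in the paper's notation.) -/
def DSep {V : Type*} (E : V → V → Prop) (y t : V) (S A : Set V) : Prop :=
  A ⊆ S ∧ ∀ p, IsPath E y t p → Blocked E y t A p

/-- The directed graph is acyclic. -/
def Acyclic {V : Type*} (E : V → V → Prop) : Prop := ∀ v, ¬ Relation.TransGen E v v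

/-- Structural assumption: every edge incident to `y` has head `y` and tail in `S`,
and every edge incident to `t` has head `t` and tail in `S`. -/
def Structural {V : Type*} (E : V → V → Prop) (y t : V) (S : Set V) : Prop :=
  (∀ a, ¬ E y a) ∧ (∀ a, ¬ E t a) ∧ (∀ a, E a y → a ∈ S) ∧ (∀ a, E a t → a ∈ S)

/-- `A` is a locally minimal element of `𝒜`: it d-separates `y` and `t` and no
proper subset of it does. -/
def LocallyMinimal {V : Type*} (E : V → V → Prop) (y t : V) (S A : Set V) : Prop :=
  DSep E y t S A ∧ ∀ B, B ⊂ A → ¬ DSep E y t S B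

/-- `A ∈ 𝒩`: `A` d-separates `y` and `t` and so does every `B` with `A ⊆ B ⊆ S`. -/
def InN {V : Type*} (E : V → V → Prop) (y t : V) (S A : Set V) : Prop :=
  DSep E y t S A ∧ ∀ B, A ⊆ B → B ⊆ S → DSep E y t S B

/-!
Since `y` and `t` have no children, a path between them leaves `y` through an edge into `y` and
reaches `t` through an edge into `t`: its first and last intermediate vertices are non-colliders,
and they are parents of `y` and of `t` respectively. Hence `S`, and `S \ {j}` for every `j` that
is not a common parent, d-separate `y` and `t`; by finiteness each contains a locally minimal
separating set, so the intersection of all of them lies in `F`. Conversely a common parent `j`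
yields the path `y ← j → t`, whose only intermediate vertex is a non-collider, so `j` lies in
every separating set.
-/

namespace List

variable {α : Type*} {l r : List α} {a b v x z : α}

theorem Nodup.eq_of_pair_infix_cons_cons (hl : (x :: v :: r).Nodup)
    (h : [a, v] <:+: x :: v :: r) : a = x := by
  have hv : v ∉ r := (nodup_cons.mp hl.of_cons).1
  rcases infix_cons_iff.mp h with h | h
  · exact (cons_prefix_cons.mp h).1
  rcases infix_cons_iff.mp h with h | h
  · exact absurd ((cons_prefix_cons.mp h).2.subset (mem_singleton_self v)) hv
  · exact absurd (h.subset (by simp)) hv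

theorem Nodup.eq_of_pair_infix_append_pair (hl : (l ++ [v, z]).Nodup)
    (h : [v, b] <:+: l ++ [v, z]) : b = z := by
  have hl' : (z :: v :: l.reverse).Nodup := by simpa using nodup_reverse.mpr hl
  exact hl'.eq_of_pair_infix_cons_cons (by simpa using h.reverse)

end List

section DSeparation

variable {V : Type*} {E : V → V → Prop} {y t : V} {S : Set V}

theorem IsPath.ne_nil (hy : ∀ a, ¬ E y a) (ht : ∀ a, ¬ E t a) {p : List V}
    (hp : IsPath E y t p) : p ≠ [] := by
  rintro rfl
  exact (List.isChain_pair.mp hp.1).elim (hy t) (ht y)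

theorem IsPath.head_edge (hy : ∀ a, ¬ E y a) {v : V} {p : List V}
    (hp : IsPath E y t (v :: p)) : E v y :=
  (List.isChain_cons_cons.mp hp.1).1.resolve_left (hy v)

theorem IsPath.last_edge (ht : ∀ a, ¬ E t a) {w : V} {p : List V}
    (hp : IsPath E y t (p ++ [w])) : E w t := by
  have hseq : pathSeq y t (p ++ [w]) = (y :: p) ++ [w, t] := by simp [pathSeq]
  have hwt : Adj E w t :=
    List.isChain_pair.mp ((hseq ▸ hp.1).infix (List.suffix_append _ _).isInfix)
  exact hwt.resolve_right (ht w)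

theorem IsPath.isNonCollider_head (hy : ∀ a, ¬ E y a) {v : V} {p : List V}
    (hp : IsPath E y t (v :: p)) : IsNonCollider E y t (v :: p) v := by
  have hnd : (y :: v :: (p ++ [t])).Nodup := hp.2
  refine ⟨List.mem_cons_self, fun ⟨_, a, b, hab, hav, _⟩ => hy v ?_⟩
  rwa [← hnd.eq_of_pair_infix_cons_cons ((List.infix_append [] [a, v] [b]).trans hab)]

theorem IsPath.isNonCollider_last (ht : ∀ a, ¬ E t a) {w : V} {p : List V}
    (hp : IsPath E y t (p ++ [w])) : IsNonCollider E y t (p ++ [w]) w := by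
  have hseq : pathSeq y t (p ++ [w]) = (y :: p) ++ [w, t] := by simp [pathSeq]
  have hnd : ((y :: p) ++ [w, t]).Nodup := hseq ▸ hp.2
  refine ⟨by simp, fun ⟨_, a, b, hab, _, hbw⟩ => ht w ?_⟩
  have hwb : [w, b] <:+: (y :: p) ++ [w, t] := hseq ▸ (List.infix_append [a] [w, b] []).trans hab
  rwa [← hnd.eq_of_pair_infix_append_pair hwb]

theorem isPath_singleton (hyt : y ≠ t) (hy : ∀ a, ¬ E y a) (ht : ∀ a, ¬ E t a) {j : V}
    (hjy : E j y) (hjt : E j t) : IsPath E y t [j] := by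
  have hjy' : j ≠ y := by rintro rfl; exact hy j hjy
  have hjt' : j ≠ t := by rintro rfl; exact ht j hjt
  refine ⟨?_, ?_⟩
  · exact List.isChain_cons_cons.mpr ⟨Or.inr hjy, List.isChain_pair.mpr (Or.inl hjt)⟩
  · simp [pathSeq, hyt, hjy'.symm, hjt']

theorem dsep_of_forall_parent_mem_or_parent_mem (hy : ∀ a, ¬ E y a) (ht : ∀ a, ¬ E t a)
    {A : Set V} (hAS : A ⊆ S) (hA : ∀ u w, E u y → E w t → u ∈ A ∨ w ∈ A) :
    DSep E y t S A := by
  refine ⟨hAS, fun p hp => ?_⟩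
  have hne := hp.ne_nil hy ht
  obtain ⟨v, r, hvr⟩ := List.exists_cons_of_ne_nil hne
  obtain ⟨q, w, hqw⟩ : ∃ q w, p = q ++ [w] :=
    ⟨p.dropLast, p.getLast hne, (List.dropLast_append_getLast hne).symm⟩
  have hvy : E v y := (hvr ▸ hp).head_edge hy
  have hwt : E w t := (hqw ▸ hp).last_edge ht
  rcases hA v w hvy hwt with hv | hw
  · subst hvr
    exact Or.inl ⟨v, hp.isNonCollider_head hy, hv⟩
  · subst hqw
    exact Or.inl ⟨w, hp.isNonCollider_last ht, hw⟩

theorem dsep_self (hstruct : Structural E y t S) : DSep E y t S S :=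
  dsep_of_forall_parent_mem_or_parent_mem hstruct.1 hstruct.2.1 subset_rfl
    fun u _ hu _ => Or.inl (hstruct.2.2.1 u hu)

theorem dsep_diff_singleton (hstruct : Structural E y t S) {j : V} (hj : ¬ (E j y ∧ E j t)) :
    DSep E y t S (S \ {j}) := by
  refine dsep_of_forall_parent_mem_or_parent_mem hstruct.1 hstruct.2.1 Set.sdiff_subset
    fun u w hu hw => ?_
  by_cases huj : u = j
  · subst huj
    have hwj : w ≠ u := by rintro rfl; exact hj ⟨hu, hw⟩
    exact Or.inr ⟨hstruct.2.2.2 w hw, hwj⟩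
  · exact Or.inl ⟨hstruct.2.2.1 u hu, huj⟩

theorem mem_of_dsep_of_parent_of_parent (hyt : y ≠ t) (hy : ∀ a, ¬ E y a) (ht : ∀ a, ¬ E t a)
    {j : V} (hjy : E j y) (hjt : E j t) {A : Set V} (hA : DSep E y t S A) : j ∈ A := by
  have hp := isPath_singleton hyt hy ht hjy hjt
  rcases hA.2 [j] hp with ⟨v, ⟨hv, -⟩, hvA⟩ | ⟨c, hc, -⟩
  · rwa [List.mem_singleton.mp hv] at hvA
  · rw [List.mem_singleton.mp hc.1] at hc
    exact absurd hc (hp.isNonCollider_head hy).2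

theorem locallyMinimal_iff_minimal {A : Set V} :
    LocallyMinimal E y t S A ↔ Minimal (DSep E y t S) A := by
  rw [minimal_iff_forall_lt]
  rfl

theorem exists_locallyMinimal_subset (hS : S.Finite) {C : Set V} (hC : DSep E y t S C) :
    ∃ A, LocallyMinimal E y t S A ∧ A ⊆ C := by
  have hfin : {B | DSep E y t S B}.Finite := hS.powerset.subset fun B hB => hB.1
  obtain ⟨A, hAC, hA⟩ := hfin.exists_le_minimal hC
  exact ⟨A, locallyMinimal_iff_minimal.mpr hA, hAC⟩

end DSeparation

theorem stmt3_general {V : Type*} [Fintype V] (E : V → V → Prop) (y t : V) (S : Set V)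
    (hyt : y ≠ t)
    (hstruct : Structural E y t S) :
    (∃ A, DSep E y t S A) ∧ (∃ A, LocallyMinimal E y t S A) ∧
    {j | j ∈ S ∧ E j y ∧ E j t} = ⋂₀ {A | LocallyMinimal E y t S A} := by
  obtain ⟨A₀, hA₀, -⟩ := exists_locallyMinimal_subset S.toFinite (dsep_self hstruct)
  refine ⟨⟨S, dsep_self hstruct⟩, ⟨A₀, hA₀⟩, Set.Subset.antisymm ?_ ?_⟩
  · rintro j ⟨-, hjy, hjt⟩ A hA
    exact mem_of_dsep_of_parent_of_parent hyt hstruct.1 hstruct.2.1 hjy hjt hA.1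
  · intro j hj
    have hjS : j ∈ S := hA₀.1.1 (hj A₀ hA₀)
    refine ⟨hjS, ?_⟩
    by_contra hnj
    obtain ⟨A, hA, hAj⟩ := exists_locallyMinimal_subset S.toFinite (dsep_diff_singleton hstruct hnj)
    exact (hAj (hj A hA)).2 rfl

/-- Proposition 1(i): under the structural assumption, `𝒜` is
nonempty, `𝒜` has at least one locally minimal element, and the set `F` of
common parents of `y` and `t` is the intersection of all locally minimal
elements of `𝒜`. -/
theorem stmt3 {V : Type*} [Fintype V] (E : V → V → Prop) (y t : V) (S : Set V)
    (hyt : y ≠ t) (hyS : y ∉ S) (htS : t ∉ S)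
    (hcover : ∀ v, v = y ∨ v = t ∨ v ∈ S)
    (hacyc : Acyclic E)
    (hstruct : Structural E y t S) :
    (∃ A, DSep E y t S A) ∧ (∃ A, LocallyMinimal E y t S A) ∧
    {j | j ∈ S ∧ E j y ∧ E j t} = ⋂₀ {A | LocallyMinimal E y t S A} :=
  stmt3_general E y t S hyt hstruct
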